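/- Let (b₁,b₂,b₃) ∈ ℝ³ with b₁² + b₂² + b₃² = 1, and let ω = b₁E₁ + b₂E₂ + b₃E₃, regarded as a complex 5×5 matrix. Then the characteristic polynomial of ω is X(X² + 1)(X² + 4) = X⁵ + 5X³ + 4X; equivalently, the eigenvalues of ω are exactly 0, i, −i, 2i, −2i, each simple. -/

import Mathlib

/-!
Every element of the span of `E₁, E₂, E₃` is skew-symmetric, and the characteristic polynomial of
a skew-symmetric `5 × 5` matrix is `X⁵ + (∑_{i<j} aᵢⱼ²) X³ + (∑ Pf²) X`, where the last sum runs over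
the Pfaffians of its five principal `4 × 4` submatrices. For `ω = b₁E₁ + b₂E₂ + b₃E₃` these two
coefficients are `5q` and `4q²` with `q = b₁² + b₂² + b₃²`.
-/

noncomputable section

open Matrix Polynomial

def E1 : Matrix (Fin 5) (Fin 5) ℝ :=
  !![0,0,0,0,Real.sqrt 3; 0,0,1,0,0; 0,-1,0,0,0; 0,0,0,0,1; -Real.sqrt 3,0,0,-1,0]

def E2 : Matrix (Fin 5) (Fin 5) ℝ :=
  !![0,0,Real.sqrt 3,0,0; 0,0,0,0,1; -Real.sqrt 3,0,0,1,0; 0,0,-1,0,0; 0,-1,0,0,0]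

def E3 : Matrix (Fin 5) (Fin 5) ℝ :=
  !![0,0,0,0,0; 0,0,0,2,0; 0,0,0,0,1; 0,-2,0,0,0; 0,0,-1,0,0]

theorem charpoly_skew_fin_five {R : Type*} [CommRing R] (a b c d e f g h i j : R) :
    (!![0, a, b, c, d; -a, 0, e, f, g; -b, -e, 0, h, i; -c, -f, -h, 0, j;
        -d, -g, -i, -j, 0]).charpoly =
      X ^ 5 + C (a ^ 2 + b ^ 2 + c ^ 2 + d ^ 2 + e ^ 2 + f ^ 2 + g ^ 2 + h ^ 2 + i ^ 2 + j ^ 2) * X ^ 3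
        + C ((a * h - b * f + c * e) ^ 2 + (a * i - b * g + d * e) ^ 2
          + (a * j - c * g + d * f) ^ 2 + (b * j - c * i + d * h) ^ 2
          + (e * j - f * i + g * h) ^ 2) * X := by
  simp [Matrix.charpoly, Matrix.det_succ_row_zero, Fin.sum_univ_succ, charmatrix_apply, Fin.succAbove]
  ring

theorem smul_E1_add_smul_E2_add_smul_E3 (b1 b2 b3 : ℂ) :
    b1 • E1.map Complex.ofReal + b2 • E2.map Complex.ofReal + b3 • E3.map Complex.ofReal =
      !![0, 0, b2 * √3, 0, b1 * √3; 0, 0, b1, 2 * b3, b2; -(b2 * √3), -b1, 0, b2, b3;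
        0, -(2 * b3), -b2, 0, b1; -(b1 * √3), -b2, -b3, -b1, 0] := by
  ext i j
  fin_cases i <;> fin_cases j <;> simp [E1, E2, E3] <;> ring

theorem charpoly_smul_E1_add_smul_E2_add_smul_E3 (b1 b2 b3 : ℂ) :
    (b1 • E1.map Complex.ofReal + b2 • E2.map Complex.ofReal + b3 • E3.map Complex.ofReal).charpoly =
      X ^ 5 + C (5 * (b1 ^ 2 + b2 ^ 2 + b3 ^ 2)) * X ^ 3
        + C (4 * (b1 ^ 2 + b2 ^ 2 + b3 ^ 2) ^ 2) * X := by
  have h3 : ((√3 : ℝ) : ℂ) ^ 2 = 3 := by norm_cast; simp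
  have hskew :=
    charpoly_skew_fin_five (0 : ℂ) (b2 * √3) 0 (b1 * √3) b1 (2 * b3) b2 b2 b3 b1
  rw [neg_zero] at hskew
  rw [smul_E1_add_smul_E2_add_smul_E3, hskew]
  congrm X ^ 5 + C ?_ * X ^ 3 + C ?_ * X
  · linear_combination (b1 ^ 2 + b2 ^ 2 : ℂ) * h3
  · linear_combination ((b1 ^ 2 + b2 ^ 2) * (b1 ^ 2 + b2 ^ 2 + 4 * b3 ^ 2) : ℂ) * h3

/-- for b₁² + b₂² + b₃² = 1 the complex matrix ω = b₁E₁ + b₂E₂ + b₃E₃ has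
characteristic polynomial X⁵ + 5X³ + 4X = X(X²+1)(X²+4); its eigenvalues are exactly
0, ±i, ±2i, each simple. -/
theorem stmt17 (b1 b2 b3 : ℝ) (hb : b1^2 + b2^2 + b3^2 = 1) :
    Matrix.charpoly
      ((b1 : ℂ) • (E1.map Complex.ofReal) + (b2 : ℂ) • (E2.map Complex.ofReal)
        + (b3 : ℂ) • (E3.map Complex.ofReal)) =
      X^5 + C 5 * X^3 + C 4 * X := by
  have hb' : (b1 : ℂ) ^ 2 + (b2 : ℂ) ^ 2 + (b3 : ℂ) ^ 2 = 1 := by exact_mod_cast hb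
  rw [charpoly_smul_E1_add_smul_E2_add_smul_E3, hb']
  norm_num
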